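/- Let 2<p<4, x∈ℝ^d and 0<R<1, and let φ∈C⁴_b(B_R(x)). Then there exists a constant C>0, depending only on p, d and ‖φ‖_{C⁴_b(B_R(x))}, such that for every y∈B_{R/2}(0)∖{0}: |D_y[φ](x) − (p−1)|y|^{−p} |∇φ(x)·y|^{p−2} ⟨D²φ(x)y, y⟩| ≤ C |y|^{p−2}. -/

import Mathlib

open MeasureTheory Metric Filter
open scoped Topology RealInnerProductSpace MeasureTheory NNReal

noncomputable section

abbrev Euc (d : ℕ) := EuclideanSpace ℝ (Fin d)

/-- `J_p(ξ) = |ξ|^{p-2} ξ`. -/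
def Jp (p ξ : ℝ) : ℝ := |ξ| ^ (p - 2) * ξ

/-- Second derivative of `φ` at `x` as a bilinear form: `⟨D²φ(x) v, w⟩`. -/
def D2 {d : ℕ} (φ : Euc d → ℝ) (x v w : Euc d) : ℝ := iteratedFDeriv ℝ 2 φ x ![v, w]

/-- The `p`-Laplacian
`Δ_pφ(x) = |∇φ(x)|^{p−2}Δφ(x) + (p−2)|∇φ(x)|^{p−4}⟨D²φ(x)∇φ(x),∇φ(x)⟩`
(with the junk-value conventions of `Real.rpow`, this is `0` when `∇φ(x) = 0` and `p > 2`). -/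
def pLap {d : ℕ} (p : ℝ) (φ : Euc d → ℝ) (x : Euc d) : ℝ :=
  ‖gradient φ x‖ ^ (p - 2) *
      (∑ i : Fin d, D2 φ x (EuclideanSpace.single i 1) (EuclideanSpace.single i 1)) +
    (p - 2) * ‖gradient φ x‖ ^ (p - 4) * D2 φ x (gradient φ x) (gradient φ x)

/-- `φ ∈ C⁴_b(s)` with `‖φ‖_{C⁴_b(s)} ≤ M`: `φ` is `C⁴` on `s` with all derivatives
up to order `4` bounded by `M`. -/
def C4bOn {d : ℕ} (φ : Euc d → ℝ) (s : Set (Euc d)) (M : ℝ) : Prop :=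
  ContDiffOn ℝ 4 φ s ∧ ∀ k : ℕ, k ≤ 4 → ∀ y ∈ s, ‖iteratedFDerivWithin ℝ k φ s y‖ ≤ M

/-- The surface measure on spheres in `ℝ^d`: the `(d−1)`-dimensional Hausdorff measure. -/
def sphMeas (d : ℕ) : Measure (Euc d) := μH[(d : ℝ) - 1]

/-- Euclidean inner product, as a real number. -/
def innP {d : ℕ} (v w : Euc d) : ℝ := ⟪v, w⟫

/-- `D_y[φ](x) = (J_p(φ(x+y)−φ(x)) + J_p(φ(x−y)−φ(x)))/|y|^p`. -/
def DyOp {d : ℕ} (p : ℝ) (φ : Euc d → ℝ) (x y : Euc d) : ℝ :=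
  (Jp p (φ (x + y) - φ x) + Jp p (φ (x - y) - φ x)) / ‖y‖ ^ p

section Helpers
open Set Asymptotics
set_option maxHeartbeats 2000000

lemma rpow_add_le {s : ℝ} (hs0 : 0 ≤ s) (hs1 : s ≤ 1) {a b : ℝ} (ha : 0 ≤ a) (hb : 0 ≤ b) :
    (a + b) ^ s ≤ a ^ s + b ^ s := by
  have := NNReal.rpow_add_le_add_rpow (⟨a, ha⟩ : ℝ≥0) (⟨b, hb⟩ : ℝ≥0) hs0 hs1
  have h1 := NNReal.coe_le_coe.2 this
  push_cast [NNReal.coe_rpow] at h1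
  exact h1

lemma absPow_sub_le {s : ℝ} (hs0 : 0 < s) (hs1 : s ≤ 1) (u v : ℝ) :
    abs (|u| ^ s - |v| ^ s) ≤ |u - v| ^ s := by
  have key : ∀ a b : ℝ, |b| ≤ |a| → |a| ^ s - |b| ^ s ≤ |a - b| ^ s := by
    intro a b hba
    have h1 : |a| ≤ |b| + |a - b| := by
      have := abs_sub_abs_le_abs_sub a b
      linarith
    have h2 : |a| ^ s ≤ (|b| + |a - b|) ^ s :=
      Real.rpow_le_rpow (abs_nonneg _) h1 hs0.le
    have h3 : (|b| + |a - b|) ^ s ≤ |b| ^ s + |a - b| ^ s :=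
      rpow_add_le hs0.le hs1 (abs_nonneg _) (abs_nonneg _)
    linarith
  rcases le_total (|v|) (|u|) with h | h
  · rw [abs_of_nonneg (by
      have := Real.rpow_le_rpow (abs_nonneg v) h hs0.le
      linarith)]
    exact key u v h
  · rw [abs_of_nonpos (by
      have := Real.rpow_le_rpow (abs_nonneg u) h hs0.le
      linarith)]
    have := key v u h
    rw [abs_sub_comm v u] at this
    linarith

lemma psi_of_nonneg {σ : ℝ} (hσ : 0 < σ) {u : ℝ} (hu : 0 ≤ u) :
    |u| ^ (σ - 1) * u = u ^ σ := by
  rcases eq_or_lt_of_le hu with h | h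
  · simp [← h, Real.zero_rpow hσ.ne']
  · rw [abs_of_pos h, Real.rpow_sub_one h.ne']
    field_simp

lemma psi_neg (σ : ℝ) (u : ℝ) : |(-u)| ^ (σ - 1) * (-u) = -(|u| ^ (σ - 1) * u) := by
  rw [abs_neg, mul_neg]

lemma psi_sub_le {σ : ℝ} (hσ0 : 0 < σ) (hσ1 : σ ≤ 1) (u v : ℝ) :
    abs (|u| ^ (σ - 1) * u - |v| ^ (σ - 1) * v) ≤ 2 * |u - v| ^ σ := by
  have auxA : ∀ u v : ℝ, 0 ≤ v → v ≤ u →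
      abs (|u| ^ (σ - 1) * u - |v| ^ (σ - 1) * v) ≤ 2 * |u - v| ^ σ := by
    intro u v hv huv
    rw [psi_of_nonneg hσ0 hv, psi_of_nonneg hσ0 (hv.trans huv)]
    have := absPow_sub_le hσ0 hσ1 u v
    rw [abs_of_nonneg (hv.trans huv), abs_of_nonneg hv] at this
    have h2 : (0:ℝ) ≤ |u - v| ^ σ := Real.rpow_nonneg (abs_nonneg _) _
    linarith
  have auxB : ∀ u v : ℝ, v ≤ 0 → 0 ≤ u →
      abs (|u| ^ (σ - 1) * u - |v| ^ (σ - 1) * v) ≤ 2 * |u - v| ^ σ := by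
    intro u v hv hu
    rw [psi_of_nonneg hσ0 hu]
    have hnv : |v| ^ (σ - 1) * v = -((-v) ^ σ) := by
      have h0 := psi_of_nonneg hσ0 (neg_nonneg.2 hv)
      rw [abs_neg] at h0
      nlinarith [h0]
    rw [hnv]
    have huv' : |u - v| = u - v := abs_of_nonneg (by linarith)
    have h1 : u ^ σ ≤ (u - v) ^ σ := Real.rpow_le_rpow hu (by linarith) hσ0.le
    have h2 : (-v) ^ σ ≤ (u - v) ^ σ :=
      Real.rpow_le_rpow (by linarith) (by linarith) hσ0.le
    have h3 : (0:ℝ) ≤ u ^ σ := Real.rpow_nonneg hu _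
    have h4 : (0:ℝ) ≤ (-v) ^ σ := Real.rpow_nonneg (by linarith) _
    rw [huv', sub_neg_eq_add, abs_of_nonneg (by linarith)]
    linarith
  have key : ∀ u v : ℝ, v ≤ u →
      abs (|u| ^ (σ - 1) * u - |v| ^ (σ - 1) * v) ≤ 2 * |u - v| ^ σ := by
    intro u v huv
    rcases le_total 0 v with hv | hv
    · exact auxA u v hv huv
    · rcases le_total 0 u with hu | hu
      · exact auxB u v hv hu
      · have := auxA (-v) (-u) (by linarith) (by linarith)
        rw [psi_neg, psi_neg, neg_sub_neg, neg_sub_neg] at this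
        exact this
  rcases le_total v u with h | h
  · exact key u v h
  · have h1 := key v u h
    rw [abs_sub_comm (|v| ^ (σ - 1) * v) (|u| ^ (σ - 1) * u), abs_sub_comm v u] at h1
    exact h1

/-- `|v|^s` is differentiable away from 0 (any `s > 0`). -/
lemma hasDerivAt_absPow_ne {s : ℝ} (hs : 0 < s) {u : ℝ} (hu : u ≠ 0) :
    HasDerivAt (fun v : ℝ => |v| ^ s) (s * (|u| ^ (s - 2) * u)) u := by
  rcases lt_or_gt_of_ne hu with h | h
  · -- u < 0
    have hder : HasDerivAt (fun v : ℝ => (-v) ^ s) (s * (-u) ^ (s - 1) * (-1)) u := by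
      have h1 : HasDerivAt (fun v : ℝ => -v) (-1 : ℝ) u := (hasDerivAt_id u).neg
      have h2 := Real.hasDerivAt_rpow_const (x := -u) (p := s) (Or.inl (by linarith))
      exact h2.comp u h1
    have hev : (fun v : ℝ => |v| ^ s) =ᶠ[𝓝 u] fun v : ℝ => (-v) ^ s := by
      filter_upwards [Iio_mem_nhds h] with v hv
      rw [abs_of_neg hv]
    have := hder.congr_of_eventuallyEq hev
    refine this.congr_deriv ?_
    symm
    have hnu : (0:ℝ) < -u := by linarith
    rw [abs_of_neg h]
    rw [Real.rpow_sub_one (by positivity : (-u : ℝ) ≠ 0)] at *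
    have : (-u : ℝ) ^ s / (-u) ^ 2 * u = -((-u) ^ s / (-u)) := by
      rw [show ((-u:ℝ) ^ 2 = (-u) * (-u)) by ring]
      field_simp
    rw [show ((-u:ℝ)) ^ (s-2) = (-u) ^ s / (-u)^2 by
      rw [show (s - 2 : ℝ) = s - (2:ℕ) by norm_num, Real.rpow_sub hnu, Real.rpow_natCast]]
    rw [this]
    ring
  · -- u > 0
    have hder := Real.hasDerivAt_rpow_const (x := u) (p := s) (Or.inl (ne_of_gt h))
    have hev : (fun v : ℝ => |v| ^ s) =ᶠ[𝓝 u] fun v : ℝ => v ^ s := by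
      filter_upwards [Ioi_mem_nhds h] with v hv
      rw [abs_of_pos hv]
    have := hder.congr_of_eventuallyEq hev
    refine this.congr_deriv ?_
    symm
    rw [abs_of_pos h]
    rw [show (s - 2 : ℝ) = s - 1 - 1 by ring, Real.rpow_sub_one (ne_of_gt h)]
    field_simp

/-- functions dominated by `|v|^s`, `s>1`, have derivative 0 at 0. -/
lemma hasDerivAt_zero_of_dominated {s : ℝ} (hs : 1 < s) {f : ℝ → ℝ}
    (hf : ∀ v, |f v| ≤ |v| ^ s) : HasDerivAt f 0 0 := by
  have hf0 : f 0 = 0 := by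
    have := hf 0
    rw [abs_zero, Real.zero_rpow (by positivity : s ≠ 0)] at this
    exact abs_nonpos_iff.1 (by linarith [abs_nonneg (f 0)])
  rw [hasDerivAt_iff_isLittleO]
  simp only [hf0, sub_zero, smul_zero, zero_smul, smul_eq_mul, mul_zero, sub_zero]
  rw [isLittleO_iff]
  intro c hc
  have htend : Tendsto (fun v : ℝ => |v| ^ (s - 1)) (𝓝 0) (𝓝 0) := by
    have h1 : Tendsto (fun v : ℝ => |v|) (𝓝 (0:ℝ)) (𝓝 (0:ℝ)) := by
      simpa using continuous_abs.tendsto (0:ℝ)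
    have h2 : Tendsto (fun w : ℝ => w ^ (s - 1)) (𝓝 (0:ℝ)) (𝓝 ((0:ℝ) ^ (s - 1))) :=
      (Real.continuousAt_rpow_const 0 (s - 1) (Or.inr (by linarith))).tendsto
    rw [Real.zero_rpow (ne_of_gt (by linarith))] at h2
    exact h2.comp h1
  filter_upwards [htend.eventually (eventually_le_nhds hc)] with v hv
  rcases eq_or_ne v 0 with rfl | hv0
  · simp [hf0]
  · have h3 : |v| ^ s = |v| ^ (s - 1) * |v| := by
      rw [← Real.rpow_add_one (by simpa using hv0) (s-1)]
      norm_num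
    have h4 : ‖f v‖ ≤ |v| ^ s := by simpa using hf v
    rw [h3] at h4
    calc ‖f v‖ ≤ |v| ^ (s - 1) * |v| := h4
      _ ≤ c * |v| := by
          apply mul_le_mul_of_nonneg_right hv (abs_nonneg v)

/-- derivative of `|v|^s` everywhere, for `s > 1`. -/
lemma hasDerivAt_absPow {s : ℝ} (hs : 1 < s) (u : ℝ) :
    HasDerivAt (fun v : ℝ => |v| ^ s) (s * (|u| ^ (s - 2) * u)) u := by
  rcases eq_or_ne u 0 with rfl | hu
  · have h0 := hasDerivAt_zero_of_dominated hs (f := fun v : ℝ => |v| ^ s)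
      (fun v => by rw [abs_of_nonneg (Real.rpow_nonneg (abs_nonneg v) s)])
    simpa using h0
  · exact hasDerivAt_absPow_ne (by linarith) hu

/-- derivative of `ψ_σ(v) = |v|^{σ-1} v` everywhere, for `σ > 1`. -/
lemma hasDerivAt_psi {σ : ℝ} (hσ : 1 < σ) (u : ℝ) :
    HasDerivAt (fun v : ℝ => |v| ^ (σ - 1) * v) (σ * |u| ^ (σ - 1)) u := by
  rcases eq_or_ne u 0 with rfl | hu
  · have h0 := hasDerivAt_zero_of_dominated hσ (f := fun v : ℝ => |v| ^ (σ - 1) * v)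
      (fun v => by
        rcases eq_or_ne v 0 with rfl | hv
        · simp [Real.zero_rpow (by positivity : σ ≠ 0)]
        · rw [abs_mul, abs_of_nonneg (Real.rpow_nonneg (abs_nonneg v) _),
            ← Real.rpow_add_one (by simpa using hv)]
          norm_num)
    have : σ * |(0:ℝ)| ^ (σ - 1) = 0 := by
      rw [abs_zero, Real.zero_rpow (ne_of_gt (by linarith))]; ring
    rw [this]
    exact h0
  · have h1 := (hasDerivAt_absPow_ne (s := σ - 1) (by linarith) hu).mul (hasDerivAt_id u)
    refine h1.congr_deriv ?_
    symm
    have habs : |u| ≠ 0 := by simpa using hu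
    have e1 : |u| ^ (σ - 1 - 2) * u * u = |u| ^ (σ - 1 - 2) * |u| ^ (2:ℝ) := by
      rw [show ((|u| : ℝ) ^ (2:ℝ)) = |u| ^ (2:ℕ) from Real.rpow_natCast _ 2]
      rw [sq_abs, pow_two]
      ring
    have e2 : |u| ^ (σ - 1 - 2) * |u| ^ (2:ℝ) = |u| ^ (σ - 1) := by
      rw [← Real.rpow_add (abs_pos.2 hu)]
      norm_num
    calc σ * |u| ^ (σ - 1)
        = (σ - 1) * (|u| ^ (σ - 1 - 2) * u) * u + |u| ^ (σ - 1) * 1 := by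
          rw [mul_assoc, e1, e2]; ring
      _ = _ := by simp only [id]
  
/-- derivative of `Jp p` everywhere, for `p > 2`. -/
lemma hasDerivAt_Jp' {p : ℝ} (hp : 2 < p) (u : ℝ) :
    HasDerivAt (fun v : ℝ => |v| ^ (p - 2) * v) ((p - 1) * |u| ^ (p - 2)) u := by
  have := hasDerivAt_psi (σ := p - 1) (by linarith) u
  simpa [show (p - 1 - 1 : ℝ) = p - 2 by ring] using this

/-- Lipschitz-type estimate for `Jp` on `[-B,B]`. -/
lemma jp_lip {p : ℝ} (hp : 2 < p) {B u v : ℝ} (hu : |u| ≤ B) (hv : |v| ≤ B) :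
    abs ((|u| ^ (p - 2) * u) - (|v| ^ (p - 2) * v)) ≤ (p - 1) * B ^ (p - 2) * |u - v| := by
  have hB : (0:ℝ) ≤ B := le_trans (abs_nonneg u) hu
  have key := Convex.norm_image_sub_le_of_norm_hasDerivWithin_le
    (f := fun w : ℝ => |w| ^ (p - 2) * w) (f' := fun w => (p - 1) * |w| ^ (p - 2))
    (s := Icc (-B) B) (C := (p - 1) * B ^ (p - 2))
    (fun w _ => (hasDerivAt_Jp' hp w).hasDerivWithinAt)
    (fun w hw => by
      have hwB : |w| ≤ B := abs_le.2 ⟨hw.1, hw.2⟩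
      have h1 : |w| ^ (p - 2) ≤ B ^ (p - 2) :=
        Real.rpow_le_rpow (abs_nonneg w) hwB (by linarith)
      rw [Real.norm_eq_abs, abs_mul, abs_of_nonneg (by linarith : (0:ℝ) ≤ p - 1),
        abs_of_nonneg (Real.rpow_nonneg (abs_nonneg w) _)]
      exact mul_le_mul_of_nonneg_left h1 (by linarith))
    (convex_Icc _ _) (abs_le.1 hv) (abs_le.1 hu)
  simpa [Real.norm_eq_abs] using key

/-- Lipschitz-type estimate for `|·|^s`, `1 < s`. -/
lemma absPow_lip {s : ℝ} (hs : 1 < s) {B u v : ℝ} (hu : |u| ≤ B) (hv : |v| ≤ B) :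
    abs (|u| ^ s - |v| ^ s) ≤ s * B ^ (s - 1) * |u - v| := by
  have hB : (0:ℝ) ≤ B := le_trans (abs_nonneg u) hu
  have key := Convex.norm_image_sub_le_of_norm_hasDerivWithin_le
    (f := fun w : ℝ => |w| ^ s) (f' := fun w => s * (|w| ^ (s - 2) * w))
    (s := Icc (-B) B) (C := s * B ^ (s - 1))
    (fun w _ => (hasDerivAt_absPow hs w).hasDerivWithinAt)
    (fun w hw => by
      have hwB : |w| ≤ B := abs_le.2 ⟨hw.1, hw.2⟩
      have h2 : abs (|w| ^ (s - 2) * w) = |w| ^ (s - 1) := by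
        rcases eq_or_ne w 0 with rfl | hw0
        · simp [Real.zero_rpow (ne_of_gt (by linarith : (0:ℝ) < s - 1))]
        · rw [abs_mul, abs_of_nonneg (Real.rpow_nonneg (abs_nonneg w) _),
            ← Real.rpow_add_one (by simpa using hw0)]
          norm_num
          rw [show (s - 2 + 1 : ℝ) = s - 1 by ring]
      have h1 : |w| ^ (s - 1) ≤ B ^ (s - 1) :=
        Real.rpow_le_rpow (abs_nonneg w) hwB (by linarith)
      rw [Real.norm_eq_abs, abs_mul, abs_of_nonneg (by linarith : (0:ℝ) ≤ s), h2]
      exact mul_le_mul_of_nonneg_left h1 (by linarith))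
    (convex_Icc _ _) (abs_le.1 hv) (abs_le.1 hu)
  simpa [Real.norm_eq_abs] using key

/-- Uniform second-difference estimate for `|·|^s`, `0 < s ≤ 2`. -/
lemma second_diff {s : ℝ} (hs0 : 0 < s) (hs2 : s ≤ 2) (a t : ℝ) :
    abs (|a + t| ^ s + |a - t| ^ s - 2 * |a| ^ s) ≤ 8 * |t| ^ s := by
  rcases le_or_gt s 1 with hs1 | hs1
  · have h1 := absPow_sub_le hs0 hs1 (a + t) a
    have h2 := absPow_sub_le hs0 hs1 (a - t) a
    rw [show (a + t - a : ℝ) = t by ring] at h1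
    rw [show (a - t - a : ℝ) = -t by ring, abs_neg] at h2
    have h3 : (0:ℝ) ≤ |t| ^ s := Real.rpow_nonneg (abs_nonneg t) _
    have e1 := abs_le.1 h1
    have e2 := abs_le.1 h2
    rw [abs_le]
    constructor <;> nlinarith
  · -- 1 < s ≤ 2 : use the derivative and MVT
    set g : ℝ → ℝ := fun w => |a + w| ^ s + |a - w| ^ s - 2 * |a| ^ s with hg
    have hder : ∀ w : ℝ, HasDerivAt g
        (s * (|a + w| ^ (s - 2) * (a + w)) - s * (|a - w| ^ (s - 2) * (a - w))) w := by
      intro w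
      have d1 : HasDerivAt (fun w' : ℝ => |a + w'| ^ s)
          (s * (|a + w| ^ (s - 2) * (a + w))) w := by
        have hc : HasDerivAt (fun w' : ℝ => a + w') 1 w := (hasDerivAt_id w).const_add a
        have := (hasDerivAt_absPow hs1 (a + w)).comp w hc
        simpa [Function.comp_def] using this
      have d2 : HasDerivAt (fun w' : ℝ => |a - w'| ^ s)
          (s * (|a - w| ^ (s - 2) * (a - w)) * (-1)) w := by
        have hc : HasDerivAt (fun w' : ℝ => a - w') (-1) w := (hasDerivAt_id w).const_sub a
        exact (hasDerivAt_absPow hs1 (a - w)).comp w hc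
      have := (d1.add d2).sub_const (2 * |a| ^ s)
      refine this.congr_deriv ?_
      symm
      ring
    have bound : ∀ w ∈ Icc (-|t|) (|t|),
        ‖s * (|a + w| ^ (s - 2) * (a + w)) - s * (|a - w| ^ (s - 2) * (a - w))‖
          ≤ 8 * |t| ^ (s - 1) := by
      intro w hw
      have hwt : |w| ≤ |t| := abs_le.2 ⟨hw.1, hw.2⟩
      have hps := psi_sub_le (σ := s - 1) (by linarith) (by linarith) (a + w) (a - w)
      rw [show (a + w - (a - w) : ℝ) = 2 * w by ring] at hps
      have e0 : (s - 1 - 1 : ℝ) = s - 2 := by ring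
      rw [e0] at hps
      have h2w : |2 * w| ^ (s - 1) ≤ 2 * |t| ^ (s - 1) := by
        have : |2 * w| ≤ 2 * |t| := by rw [abs_mul]; simp; linarith
        calc |2 * w| ^ (s - 1) ≤ (2 * |t|) ^ (s - 1) :=
              Real.rpow_le_rpow (abs_nonneg _) this (by linarith)
          _ = 2 ^ (s - 1 : ℝ) * |t| ^ (s - 1) :=
              Real.mul_rpow (by norm_num) (abs_nonneg t)
          _ ≤ 2 * |t| ^ (s - 1) := by
              have : (2:ℝ) ^ (s - 1 : ℝ) ≤ 2 ^ (1 : ℝ) :=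
                Real.rpow_le_rpow_of_exponent_le (by norm_num) (by linarith)
              rw [Real.rpow_one] at this
              exact mul_le_mul_of_nonneg_right this (Real.rpow_nonneg (abs_nonneg t) _)
      calc ‖s * (|a + w| ^ (s - 2) * (a + w)) - s * (|a - w| ^ (s - 2) * (a - w))‖
          = s * abs ((|a + w| ^ (s - 2) * (a + w)) - (|a - w| ^ (s - 2) * (a - w))) := by
            rw [Real.norm_eq_abs, ← mul_sub, abs_mul, abs_of_nonneg (by linarith : (0:ℝ) ≤ s)]
        _ ≤ s * (2 * |2 * w| ^ (s - 1)) := mul_le_mul_of_nonneg_left hps (by linarith)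
        _ ≤ 2 * (2 * (2 * |t| ^ (s - 1))) := by nlinarith [Real.rpow_nonneg (abs_nonneg (2*w)) (s-1)]
        _ = 8 * |t| ^ (s - 1) := by ring
    have key := Convex.norm_image_sub_le_of_norm_hasDerivWithin_le
      (f := g) (f' := fun w => s * (|a + w| ^ (s - 2) * (a + w)) - s * (|a - w| ^ (s - 2) * (a - w)))
      (s := Icc (-|t|) (|t|)) (C := 8 * |t| ^ (s - 1))
      (fun w _ => (hder w).hasDerivWithinAt) bound (convex_Icc _ _)
      (by constructor <;> simp [abs_nonneg] : (0:ℝ) ∈ Icc (-|t|) (|t|))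
      (by constructor <;> [linarith [neg_abs_le t]; exact le_abs_self t] : t ∈ Icc (-|t|) (|t|))
    have hg0 : g 0 = 0 := by simp [hg]; ring
    rw [hg0, sub_zero, sub_zero, Real.norm_eq_abs, Real.norm_eq_abs] at key
    have : 8 * |t| ^ (s - 1) * |t| = 8 * |t| ^ s := by
      rcases eq_or_ne t 0 with rfl | ht
      · simp [Real.zero_rpow (ne_of_gt hs0), Real.zero_rpow (ne_of_gt (by linarith : (0:ℝ) < s - 1))]
      · rw [mul_assoc, ← Real.rpow_add_one (by simpa using ht)]
        norm_num
    rw [this] at key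
    exact key

/-- Symmetric second-order expansion of `Jp` around `a`. -/
lemma jp_sym {p : ℝ} (hp1 : 2 < p) (hp2 : p < 4) (a h : ℝ) :
    abs ((|a + h| ^ (p - 2) * (a + h)) - (|a - h| ^ (p - 2) * (a - h))
        - 2 * ((p - 1) * |a| ^ (p - 2)) * h) ≤ 8 * (p - 1) * (|h| ^ (p - 2) * |h|) := by
  set F : ℝ → ℝ := fun w => (|a + w| ^ (p - 2) * (a + w)) - (|a - w| ^ (p - 2) * (a - w))
    - 2 * ((p - 1) * |a| ^ (p - 2)) * w with hF
  have hder : ∀ w : ℝ, HasDerivAt F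
      ((p - 1) * |a + w| ^ (p - 2) + (p - 1) * |a - w| ^ (p - 2)
        - 2 * ((p - 1) * |a| ^ (p - 2))) w := by
    intro w
    have d1 : HasDerivAt (fun w' : ℝ => |a + w'| ^ (p - 2) * (a + w'))
        ((p - 1) * |a + w| ^ (p - 2)) w := by
      have hc : HasDerivAt (fun w' : ℝ => a + w') 1 w := (hasDerivAt_id w).const_add a
      have := (hasDerivAt_Jp' hp1 (a + w)).comp w hc
      simpa [Function.comp_def] using this
    have d2 : HasDerivAt (fun w' : ℝ => |a - w'| ^ (p - 2) * (a - w'))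
        ((p - 1) * |a - w| ^ (p - 2) * (-1)) w := by
      have hc : HasDerivAt (fun w' : ℝ => a - w') (-1) w := (hasDerivAt_id w).const_sub a
      exact (hasDerivAt_Jp' hp1 (a - w)).comp w hc
    have d3 : HasDerivAt (fun w' : ℝ => 2 * ((p - 1) * |a| ^ (p - 2)) * w')
        (2 * ((p - 1) * |a| ^ (p - 2))) w := by
      simpa using (hasDerivAt_id w).const_mul (2 * ((p - 1) * |a| ^ (p - 2)))
    have := (d1.sub d2).sub d3
    refine this.congr_deriv ?_
    symm
    ring
  have bound : ∀ w ∈ Icc (-|h|) (|h|),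
      ‖(p - 1) * |a + w| ^ (p - 2) + (p - 1) * |a - w| ^ (p - 2)
        - 2 * ((p - 1) * |a| ^ (p - 2))‖ ≤ 8 * (p - 1) * |h| ^ (p - 2) := by
    intro w hw
    have hwt : |w| ≤ |h| := abs_le.2 ⟨hw.1, hw.2⟩
    have hsd := second_diff (s := p - 2) (by linarith) (by linarith) a w
    have hmono : |w| ^ (p - 2 : ℝ) ≤ |h| ^ (p - 2 : ℝ) :=
      Real.rpow_le_rpow (abs_nonneg w) hwt (by linarith)
    calc ‖(p - 1) * |a + w| ^ (p - 2) + (p - 1) * |a - w| ^ (p - 2)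
          - 2 * ((p - 1) * |a| ^ (p - 2))‖
        = (p - 1) * abs (|a + w| ^ (p - 2) + |a - w| ^ (p - 2) - 2 * |a| ^ (p - 2)) := by
          rw [Real.norm_eq_abs, show ((p - 1) * |a + w| ^ (p - 2) + (p - 1) * |a - w| ^ (p - 2)
            - 2 * ((p - 1) * |a| ^ (p - 2)) : ℝ)
            = (p - 1) * (|a + w| ^ (p - 2) + |a - w| ^ (p - 2) - 2 * |a| ^ (p - 2)) by ring,
            abs_mul, abs_of_nonneg (by linarith : (0:ℝ) ≤ p - 1)]
      _ ≤ (p - 1) * (8 * |w| ^ (p - 2)) := mul_le_mul_of_nonneg_left hsd (by linarith)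
      _ ≤ 8 * (p - 1) * |h| ^ (p - 2) := by nlinarith
  have key := Convex.norm_image_sub_le_of_norm_hasDerivWithin_le
    (f := F) (f' := fun w => (p - 1) * |a + w| ^ (p - 2) + (p - 1) * |a - w| ^ (p - 2)
      - 2 * ((p - 1) * |a| ^ (p - 2)))
    (s := Icc (-|h|) (|h|)) (C := 8 * (p - 1) * |h| ^ (p - 2))
    (fun w _ => (hder w).hasDerivWithinAt) bound (convex_Icc _ _)
    (by constructor <;> simp [abs_nonneg] : (0:ℝ) ∈ Icc (-|h|) (|h|))
    (by constructor <;> [linarith [neg_abs_le h]; exact le_abs_self h] : h ∈ Icc (-|h|) (|h|))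
  have hF0 : F 0 = 0 := by simp [hF]
  rw [hF0, sub_zero, sub_zero, Real.norm_eq_abs, Real.norm_eq_abs] at key
  calc abs (F h) ≤ 8 * (p - 1) * |h| ^ (p - 2) * |h| := key
    _ = 8 * (p - 1) * (|h| ^ (p - 2) * |h|) := by ring

/-- The core scalar estimate. -/
lemma core_est {p : ℝ} (hp1 : 2 < p) (hp2 : p < 4) {Λ r g h c e₁ e₂ u₁ u₂ : ℝ}
    (hΛ1 : 1 ≤ Λ) (hr0 : 0 < r) (hr1 : r < 1)
    (hg : |g| ≤ Λ * r) (hh : |h| ≤ Λ * r ^ (2:ℕ)) (hc : |c| ≤ Λ * r ^ (3:ℕ))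
    (he₁ : |e₁| ≤ Λ * r ^ (4:ℕ)) (he₂ : |e₂| ≤ Λ * r ^ (4:ℕ))
    (hu₁ : u₁ = g + h + c + e₁) (hu₂ : u₂ = -g + h - c + e₂) :
    abs ((|u₁| ^ (p - 2) * u₁ + |u₂| ^ (p - 2) * u₂) - (p - 1) * |g| ^ (p - 2) * (2 * h))
      ≤ ((p - 1) * (4 * Λ) ^ (p - 2) * Λ + (p - 1) * (4 * Λ) ^ (p - 2) * Λ
          + 8 * (p - 1) * (Λ ^ (p - 2) * Λ)
          + (2 * (p - 1) * Λ * Λ ^ (p - 2) + 2 * (p - 1) * Λ * ((p - 2) * (2 * Λ) ^ (p - 3) * Λ)))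
        * r ^ (2 * p - 2) := by
  have hΛ0 : (0:ℝ) < Λ := by linarith
  have hr2 : r ^ (2:ℕ) ≤ r := by nlinarith
  have hr3 : r ^ (3:ℕ) ≤ r := by nlinarith
  have hr4 : r ^ (4:ℕ) ≤ r := by nlinarith
  set a : ℝ := g + c with ha
  -- rewrite u₂ via oddness
  have hodd : |u₂| ^ (p - 2) * u₂ = -(|(a - h - e₂)| ^ (p - 2) * (a - h - e₂)) := by
    have : u₂ = -(a - h - e₂) := by rw [ha, hu₂]; ring
    rw [this]
    have := psi_neg (p - 1) (a - h - e₂)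
    rw [show (p - 1 - 1 : ℝ) = p - 2 by ring] at this
    exact this
  -- bounds on the various points
  have hab : |a| ≤ 2 * Λ * r := by
    rw [ha]
    calc |g + c| ≤ |g| + |c| := abs_add_le _ _
      _ ≤ Λ * r + Λ * r := by nlinarith
      _ = 2 * Λ * r := by ring
  have hu₁b : |u₁| ≤ 4 * Λ * r := by
    rw [hu₁]
    calc |g + h + c + e₁| ≤ |g| + |h| + |c| + |e₁| := by
          calc _ ≤ |g + h + c| + |e₁| := abs_add_le _ _
            _ ≤ |g + h| + |c| + |e₁| := by linarith [abs_add_le (g + h) c]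
            _ ≤ |g| + |h| + |c| + |e₁| := by linarith [abs_add_le g h]
      _ ≤ 4 * Λ * r := by nlinarith
  have hahb : |a + h| ≤ 4 * Λ * r := by
    calc |a + h| ≤ |a| + |h| := abs_add_le _ _
      _ ≤ 4 * Λ * r := by nlinarith
  have hahb' : |a - h| ≤ 4 * Λ * r := by
    calc |a - h| ≤ |a| + |h| := abs_sub _ _
      _ ≤ 4 * Λ * r := by nlinarith
  have hu₂b : |a - h - e₂| ≤ 4 * Λ * r := by
    calc |a - h - e₂| ≤ |a - h| + |e₂| := abs_sub _ _
      _ ≤ |a| + |h| + |e₂| := by linarith [abs_sub a h]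
      _ ≤ 4 * Λ * r := by nlinarith
  have hB0 : (0:ℝ) ≤ 4 * Λ * r := by positivity
  -- T1
  have hT1 : abs ((|u₁| ^ (p - 2) * u₁) - (|a + h| ^ (p - 2) * (a + h)))
      ≤ (p - 1) * (4 * Λ * r) ^ (p - 2) * (Λ * r ^ (4:ℕ)) := by
    have := jp_lip hp1 hu₁b hahb
    have he : |u₁ - (a + h)| ≤ Λ * r ^ (4:ℕ) := by
      rw [hu₁, ha, show (g + h + c + e₁ - (g + c + h) : ℝ) = e₁ by ring]
      exact he₁
    calc abs ((|u₁| ^ (p - 2) * u₁) - (|a + h| ^ (p - 2) * (a + h)))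
        ≤ (p - 1) * (4 * Λ * r) ^ (p - 2) * |u₁ - (a + h)| := this
      _ ≤ (p - 1) * (4 * Λ * r) ^ (p - 2) * (Λ * r ^ (4:ℕ)) := by
          apply mul_le_mul_of_nonneg_left he
          exact mul_nonneg (by linarith) (Real.rpow_nonneg hB0 _)
  have hT2 : abs ((|(a - h - e₂)| ^ (p - 2) * (a - h - e₂)) - (|a - h| ^ (p - 2) * (a - h)))
      ≤ (p - 1) * (4 * Λ * r) ^ (p - 2) * (Λ * r ^ (4:ℕ)) := by
    have := jp_lip hp1 hu₂b hahb'
    have he : |a - h - e₂ - (a - h)| ≤ Λ * r ^ (4:ℕ) := by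
      rw [show (a - h - e₂ - (a - h) : ℝ) = -e₂ by ring, abs_neg]
      exact he₂
    calc abs ((|(a - h - e₂)| ^ (p - 2) * (a - h - e₂)) - (|a - h| ^ (p - 2) * (a - h)))
        ≤ (p - 1) * (4 * Λ * r) ^ (p - 2) * |a - h - e₂ - (a - h)| := this
      _ ≤ (p - 1) * (4 * Λ * r) ^ (p - 2) * (Λ * r ^ (4:ℕ)) := by
          apply mul_le_mul_of_nonneg_left he
          exact mul_nonneg (by linarith) (Real.rpow_nonneg hB0 _)
  have hT3 := jp_sym hp1 hp2 a h
  -- T4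
  -- exponent arithmetic helpers
  have hnat : ∀ k : ℕ, (r:ℝ) ^ (k:ℕ) = r ^ ((k:ℕ):ℝ) := fun k => (Real.rpow_natCast r k).symm
  have hmain : ∀ b q : ℝ, 2 * p - 2 ≤ q + b → (0:ℝ) ≤ b → r ^ q * r ^ b ≤ r ^ (2 * p - 2) := by
    intro b q hq hb
    rw [← Real.rpow_add hr0]
    exact Real.rpow_le_rpow_of_exponent_ge hr0 hr1.le (by linarith)
  have hexp1 : (p - 1) * (4 * Λ * r) ^ (p - 2) * (Λ * r ^ (4:ℕ))
      ≤ (p - 1) * (4 * Λ) ^ (p - 2) * Λ * r ^ (2 * p - 2) := by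
    have h1 : (4 * Λ * r) ^ (p - 2 : ℝ) = (4 * Λ) ^ (p - 2 : ℝ) * r ^ (p - 2 : ℝ) :=
      Real.mul_rpow (by positivity) hr0.le
    rw [h1, hnat 4]
    have h2 : r ^ (p - 2 : ℝ) * r ^ ((4:ℕ):ℝ) ≤ r ^ (2 * p - 2) :=
      hmain _ _ (by push_cast; linarith) (by positivity)
    calc (p - 1) * ((4 * Λ) ^ (p - 2 : ℝ) * r ^ (p - 2 : ℝ)) * (Λ * r ^ ((4:ℕ):ℝ))
        = (p - 1) * (4 * Λ) ^ (p - 2 : ℝ) * Λ * (r ^ (p - 2 : ℝ) * r ^ ((4:ℕ):ℝ)) := by ring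
      _ ≤ (p - 1) * (4 * Λ) ^ (p - 2 : ℝ) * Λ * r ^ (2 * p - 2) := by
          apply mul_le_mul_of_nonneg_left h2
          have h9 := Real.rpow_nonneg (by positivity : (0:ℝ) ≤ 4 * Λ) (p - 2)
          exact mul_nonneg (mul_nonneg (by linarith) h9) hΛ0.le
  have hexp3 : 8 * (p - 1) * (|h| ^ (p - 2) * |h|)
      ≤ 8 * (p - 1) * (Λ ^ (p - 2) * Λ) * r ^ (2 * p - 2) := by
    have h1 : |h| ^ (p - 2 : ℝ) ≤ (Λ * r ^ (2:ℕ)) ^ (p - 2 : ℝ) :=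
      Real.rpow_le_rpow (abs_nonneg h) hh (by linarith)
    have h2 : |h| ^ (p - 2 : ℝ) * |h| ≤ (Λ * r ^ (2:ℕ)) ^ (p - 2 : ℝ) * (Λ * r ^ (2:ℕ)) :=
      mul_le_mul h1 hh (abs_nonneg h) (Real.rpow_nonneg (by positivity) _)
    have h3 : (Λ * r ^ (2:ℕ)) ^ (p - 2 : ℝ) = Λ ^ (p - 2 : ℝ) * (r ^ (2:ℕ)) ^ (p - 2 : ℝ) :=
      Real.mul_rpow hΛ0.le (by positivity)
    have h4 : ((r:ℝ) ^ (2:ℕ)) ^ (p - 2 : ℝ) = r ^ (((2:ℕ):ℝ) * (p - 2)) := by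
      rw [hnat 2, ← Real.rpow_mul hr0.le]
    have h5 : r ^ (((2:ℕ):ℝ) * (p - 2)) * r ^ ((2:ℕ):ℝ) ≤ r ^ (2 * p - 2) :=
      hmain _ _ (by push_cast; linarith) (by positivity)
    calc 8 * (p - 1) * (|h| ^ (p - 2) * |h|)
        ≤ 8 * (p - 1) * ((Λ * r ^ (2:ℕ)) ^ (p - 2 : ℝ) * (Λ * r ^ (2:ℕ))) := by
          apply mul_le_mul_of_nonneg_left h2 (by linarith)
      _ = 8 * (p - 1) * (Λ ^ (p - 2 : ℝ) * Λ) * (r ^ (((2:ℕ):ℝ) * (p - 2)) * r ^ ((2:ℕ):ℝ)) := by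
          rw [h3, h4, hnat 2]; ring
      _ ≤ 8 * (p - 1) * (Λ ^ (p - 2 : ℝ) * Λ) * r ^ (2 * p - 2) := by
          apply mul_le_mul_of_nonneg_left h5
          have h9 := Real.rpow_nonneg hΛ0.le (p - 2)
          exact mul_nonneg (by linarith) (mul_nonneg h9 hΛ0.le)
  -- T4
  have hK4b0 : (0:ℝ) ≤ 2 * (p - 1) * Λ * ((p - 2) * (2 * Λ) ^ (p - 3) * Λ) := by
    have := Real.rpow_nonneg (by positivity : (0:ℝ) ≤ 2 * Λ) (p - 3)
    have h1 : (0:ℝ) ≤ (p - 2) * (2 * Λ) ^ (p - 3) * Λ := by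
      apply mul_nonneg (mul_nonneg (by linarith) this) hΛ0.le
    exact mul_nonneg (mul_nonneg (by linarith) hΛ0.le) h1
  have hK4a0 : (0:ℝ) ≤ 2 * (p - 1) * Λ * Λ ^ (p - 2) :=
    mul_nonneg (mul_nonneg (by linarith) hΛ0.le) (Real.rpow_nonneg hΛ0.le (p - 2))
  have hT4 : abs (2 * (p - 1) * (|a| ^ (p - 2) - |g| ^ (p - 2)) * h)
      ≤ (2 * (p - 1) * Λ * Λ ^ (p - 2) + 2 * (p - 1) * Λ * ((p - 2) * (2 * Λ) ^ (p - 3) * Λ))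
        * r ^ (2 * p - 2) := by
    have hagc : a - g = c := by rw [ha]; ring
    have habs : abs (2 * (p - 1) * (|a| ^ (p - 2) - |g| ^ (p - 2)) * h)
        = 2 * (p - 1) * abs (|a| ^ (p - 2) - |g| ^ (p - 2)) * |h| := by
      rw [abs_mul, abs_mul, abs_of_nonneg (by linarith : (0:ℝ) ≤ 2 * (p - 1))]
    rcases le_or_gt p 3 with hp3 | hp3
    · -- p ≤ 3 : Hölder bound
      have hd : abs (|a| ^ (p - 2) - |g| ^ (p - 2)) ≤ |c| ^ (p - 2 : ℝ) := by
        have := absPow_sub_le (s := p - 2) (by linarith) (by linarith) a g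
        rwa [hagc] at this
      have hc' : |c| ^ (p - 2 : ℝ) ≤ (Λ * r ^ (3:ℕ)) ^ (p - 2 : ℝ) :=
        Real.rpow_le_rpow (abs_nonneg c) hc (by linarith)
      have h3 : (Λ * (r:ℝ) ^ (3:ℕ)) ^ (p - 2 : ℝ) = Λ ^ (p - 2 : ℝ) * r ^ (((3:ℕ):ℝ) * (p - 2)) := by
        rw [Real.mul_rpow hΛ0.le (by positivity), hnat 3, ← Real.rpow_mul hr0.le]
      have h5 : r ^ (((3:ℕ):ℝ) * (p - 2)) * r ^ ((2:ℕ):ℝ) ≤ r ^ (2 * p - 2) :=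
        hmain _ _ (by push_cast; linarith) (by positivity)
      have hΛp := Real.rpow_nonneg hΛ0.le (p - 2)
      calc abs (2 * (p - 1) * (|a| ^ (p - 2) - |g| ^ (p - 2)) * h)
          = 2 * (p - 1) * abs (|a| ^ (p - 2) - |g| ^ (p - 2)) * |h| := habs
        _ ≤ 2 * (p - 1) * (Λ ^ (p - 2 : ℝ) * r ^ (((3:ℕ):ℝ) * (p - 2))) * (Λ * r ^ ((2:ℕ):ℝ)) := by
            rw [← h3, ← hnat 2]
            apply mul_le_mul (mul_le_mul_of_nonneg_left (hd.trans hc') (by linarith)) hh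
              (abs_nonneg h)
            exact mul_nonneg (by linarith)
              (Real.rpow_nonneg (by positivity : (0:ℝ) ≤ Λ * r ^ (3:ℕ)) (p - 2))
        _ = 2 * (p - 1) * Λ * Λ ^ (p - 2 : ℝ) * (r ^ (((3:ℕ):ℝ) * (p - 2)) * r ^ ((2:ℕ):ℝ)) := by
            ring
        _ ≤ 2 * (p - 1) * Λ * Λ ^ (p - 2 : ℝ) * r ^ (2 * p - 2) :=
            mul_le_mul_of_nonneg_left h5 hK4a0
        _ ≤ _ := by
            have h9 := mul_nonneg hK4b0 (Real.rpow_nonneg hr0.le (2 * p - 2))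
            linarith
    · -- 3 < p : Lipschitz bound
      have hgb : |g| ≤ 2 * Λ * r := by nlinarith
      have hd := absPow_lip (s := p - 2) (by linarith) hab hgb
      rw [hagc, show (p - 2 - 1 : ℝ) = p - 3 by ring] at hd
      have h23 : (2 * Λ * r) ^ (p - 3 : ℝ) = (2 * Λ) ^ (p - 3 : ℝ) * r ^ (p - 3 : ℝ) :=
        Real.mul_rpow (by positivity) hr0.le
      have hdc : abs (|a| ^ (p - 2) - |g| ^ (p - 2))
          ≤ (p - 2) * ((2 * Λ) ^ (p - 3 : ℝ) * r ^ (p - 3 : ℝ)) * (Λ * r ^ ((3:ℕ):ℝ)) := by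
        rw [← h23, ← hnat 3]
        calc abs (|a| ^ (p - 2) - |g| ^ (p - 2)) ≤ (p - 2) * (2 * Λ * r) ^ (p - 3 : ℝ) * |c| := hd
          _ ≤ (p - 2) * (2 * Λ * r) ^ (p - 3 : ℝ) * (Λ * r ^ (3:ℕ)) := by
              apply mul_le_mul_of_nonneg_left hc
              exact mul_nonneg (by linarith) (Real.rpow_nonneg (by positivity) _)
      have h5 : r ^ (p - 3 : ℝ) * r ^ ((3:ℕ):ℝ) * r ^ ((2:ℕ):ℝ) ≤ r ^ (2 * p - 2) := by
        rw [← Real.rpow_add hr0, ← Real.rpow_add hr0]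
        exact Real.rpow_le_rpow_of_exponent_ge hr0 hr1.le (by push_cast; linarith)
      calc abs (2 * (p - 1) * (|a| ^ (p - 2) - |g| ^ (p - 2)) * h)
          = 2 * (p - 1) * abs (|a| ^ (p - 2) - |g| ^ (p - 2)) * |h| := habs
        _ ≤ 2 * (p - 1) * ((p - 2) * ((2 * Λ) ^ (p - 3 : ℝ) * r ^ (p - 3 : ℝ))
              * (Λ * r ^ ((3:ℕ):ℝ))) * (Λ * r ^ ((2:ℕ):ℝ)) := by
            rw [← hnat 2]
            apply mul_le_mul (mul_le_mul_of_nonneg_left hdc (by linarith)) hh (abs_nonneg h)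
            have h6 := Real.rpow_nonneg (by positivity : (0:ℝ) ≤ 2 * Λ) (p - 3)
            have h7 := Real.rpow_nonneg hr0.le (p - 3)
            have h8 := Real.rpow_nonneg hr0.le ((3:ℕ):ℝ)
            exact mul_nonneg (by linarith)
              (mul_nonneg (mul_nonneg (by linarith) (mul_nonneg h6 h7))
                (by positivity))
        _ = 2 * (p - 1) * Λ * ((p - 2) * (2 * Λ) ^ (p - 3 : ℝ) * Λ)
              * (r ^ (p - 3 : ℝ) * r ^ ((3:ℕ):ℝ) * r ^ ((2:ℕ):ℝ)) := by ring
        _ ≤ 2 * (p - 1) * Λ * ((p - 2) * (2 * Λ) ^ (p - 3 : ℝ) * Λ) * r ^ (2 * p - 2) :=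
            mul_le_mul_of_nonneg_left h5 hK4b0
        _ ≤ _ := by
            have h9 := mul_nonneg hK4a0 (Real.rpow_nonneg hr0.le (2 * p - 2))
            linarith
  -- assemble
  have hid : (|u₁| ^ (p - 2) * u₁ + |u₂| ^ (p - 2) * u₂) - (p - 1) * |g| ^ (p - 2) * (2 * h)
      = ((|u₁| ^ (p - 2) * u₁) - (|a + h| ^ (p - 2) * (a + h)))
        - ((|(a - h - e₂)| ^ (p - 2) * (a - h - e₂)) - (|a - h| ^ (p - 2) * (a - h)))
        + ((|a + h| ^ (p - 2) * (a + h)) - (|a - h| ^ (p - 2) * (a - h))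
            - 2 * ((p - 1) * |a| ^ (p - 2)) * h)
        + (2 * (p - 1) * (|a| ^ (p - 2) - |g| ^ (p - 2)) * h) := by
    rw [hodd]; ring
  rw [hid]
  have htri : ∀ A B C D : ℝ, abs (A - B + C + D) ≤ |A| + |B| + |C| + |D| := by
    intro A B C D
    calc abs (A - B + C + D) ≤ abs (A - B + C) + |D| := abs_add_le _ _
      _ ≤ abs (A - B) + |C| + |D| := by linarith [abs_add_le (A - B) C]
      _ ≤ |A| + |B| + |C| + |D| := by linarith [abs_sub A B]
  calc abs _ ≤ _ := htri _ _ _ _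
    _ ≤ ((p - 1) * (4 * Λ) ^ (p - 2) * Λ + (p - 1) * (4 * Λ) ^ (p - 2) * Λ
          + 8 * (p - 1) * (Λ ^ (p - 2) * Λ)
          + (2 * (p - 1) * Λ * Λ ^ (p - 2) + 2 * (p - 1) * Λ * ((p - 2) * (2 * Λ) ^ (p - 3) * Λ)))
        * r ^ (2 * p - 2) := by
        have b1 := hT1.trans hexp1
        have b2 := hT2.trans hexp1
        have b3 := hT3.trans hexp3
        linarith [hT4]

/-- Iterated derivatives of `t ↦ φ (x + t • y)` along `[0,1]`. -/
lemma iter_comp {d : ℕ} {φ : Euc d → ℝ} {x y : Euc d} {R : ℝ}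
    (hφ : ContDiffOn ℝ 4 φ (ball x R))
    (hy : ∀ t ∈ Icc (0:ℝ) 1, x + t • y ∈ ball x R) :
    ∀ k : ℕ, k ≤ 4 → ∀ t ∈ Icc (0:ℝ) 1,
      iteratedDerivWithin k (fun t' => φ (x + t' • y)) (Icc 0 1) t
        = iteratedFDeriv ℝ k φ (x + t • y) (fun _ => y) := by
  intro k
  induction k with
  | zero =>
    intro _ t ht
    simp [iteratedDerivWithin_zero]
  | succ k IH =>
    intro hk4 t ht
    have hk4' : k ≤ 4 := by omega
    have hksm : (k : WithTop ℕ∞) < 4 := by exact_mod_cast (by omega : k < 4)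
    have hud : UniqueDiffWithinAt ℝ (Icc (0:ℝ) 1) t := (uniqueDiffOn_Icc one_pos) t ht
    rw [iteratedDerivWithin_succ]
    have hEq : Set.EqOn (iteratedDerivWithin k (fun t' : ℝ => φ (x + t' • y)) (Icc (0:ℝ) 1))
        (fun t' : ℝ => iteratedFDeriv ℝ k φ (x + t' • y) (fun _ => y)) (Icc (0:ℝ) 1) :=
      fun t' ht' => IH hk4' t' ht'
    rw [derivWithin_congr hEq (hEq ht)]
    -- now compute the derivative of the smooth diagonal function
    set z := x + t • y with hz
    have hzball : z ∈ ball x R := hy t ht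
    have hdiffat : DifferentiableAt ℝ (iteratedFDeriv ℝ k φ) z := by
      have h1 : DifferentiableOn ℝ (iteratedFDerivWithin ℝ k φ (ball x R)) (ball x R) :=
        hφ.differentiableOn_iteratedFDerivWithin hksm isOpen_ball.uniqueDiffOn
      have h2 : DifferentiableAt ℝ (iteratedFDerivWithin ℝ k φ (ball x R)) z :=
        (h1 z hzball).differentiableAt (isOpen_ball.mem_nhds hzball)
      apply h2.congr_of_eventuallyEq
      filter_upwards [isOpen_ball.mem_nhds hzball] with w hw
      exact (iteratedFDerivWithin_of_isOpen k isOpen_ball hw).symm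
    have hpath : HasDerivAt (fun t' : ℝ => x + t' • y) y t := by
      simpa using ((hasDerivAt_id t).smul_const y).const_add x
    have hcomp : HasDerivAt (fun t' : ℝ => iteratedFDeriv ℝ k φ (x + t' • y))
        (fderiv ℝ (iteratedFDeriv ℝ k φ) z y) t :=
      hdiffat.hasFDerivAt.comp_hasDerivAt t hpath
    have happ : HasDerivAt (fun t' : ℝ => iteratedFDeriv ℝ k φ (x + t' • y) (fun _ => y))
        (fderiv ℝ (iteratedFDeriv ℝ k φ) z y (fun _ => y)) t := by
      have L := ContinuousMultilinearMap.apply ℝ (fun _ : Fin k => Euc d) ℝ (fun _ => y)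
      exact (ContinuousMultilinearMap.apply ℝ (fun _ : Fin k => Euc d) ℝ
        (fun _ => y)).hasFDerivAt.comp_hasDerivAt t hcomp
    rw [happ.hasDerivWithinAt.derivWithin hud]
    rw [iteratedFDeriv_succ_apply_left]
    rfl

/-- Fourth-order Taylor bound for `φ` at `x`. -/
lemma taylor4 {d : ℕ} {φ : Euc d → ℝ} {x : Euc d} {R M : ℝ}
    (hφ : C4bOn φ (ball x R) M) {y : Euc d} (hy : ‖y‖ < R) :
    |φ (x + y) - φ x - iteratedFDeriv ℝ 1 φ x (fun _ => y)
      - (1/2) * iteratedFDeriv ℝ 2 φ x (fun _ => y)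
      - (1/6) * iteratedFDeriv ℝ 3 φ x (fun _ => y)| ≤ M * ‖y‖ ^ (4:ℕ) / 6 := by
  have hseg : ∀ t ∈ Icc (0:ℝ) 1, x + t • y ∈ ball x R := by
    intro t ht
    rw [mem_ball, dist_eq_norm, add_sub_cancel_left, norm_smul, Real.norm_eq_abs]
    calc |t| * ‖y‖ ≤ 1 * ‖y‖ :=
          mul_le_mul_of_nonneg_right (abs_le.2 ⟨by linarith [ht.1], ht.2⟩) (norm_nonneg y)
      _ < R := by simpa using hy
  set ψ : ℝ → ℝ := fun t => φ (x + t • y) with hψ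
  have hcomp := iter_comp hφ.1 hseg
  have hψcd : ContDiffOn ℝ 4 ψ (Icc (0:ℝ) 1) := by
    have haff : ContDiff ℝ 4 (fun t : ℝ => x + t • y) :=
      contDiff_const.add (contDiff_id.smul contDiff_const)
    exact hφ.1.comp haff.contDiffOn hseg
  have hC : ∀ τ ∈ Icc (0:ℝ) 1,
      ‖iteratedDerivWithin 4 ψ (Icc (0:ℝ) 1) τ‖ ≤ M * ‖y‖ ^ (4:ℕ) := by
    intro τ hτ
    rw [hcomp 4 le_rfl τ hτ]
    have hz := hseg τ hτ
    calc ‖iteratedFDeriv ℝ 4 φ (x + τ • y) (fun _ => y)‖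
        ≤ ‖iteratedFDeriv ℝ 4 φ (x + τ • y)‖ * ∏ _i : Fin 4, ‖y‖ :=
          (iteratedFDeriv ℝ 4 φ (x + τ • y)).le_opNorm _
      _ = ‖iteratedFDeriv ℝ 4 φ (x + τ • y)‖ * ‖y‖ ^ (4:ℕ) := by
          rw [Finset.prod_const]; simp
      _ ≤ M * ‖y‖ ^ (4:ℕ) := by
          apply mul_le_mul_of_nonneg_right _ (by positivity)
          rw [← iteratedFDerivWithin_of_isOpen 4 isOpen_ball hz]
          exact hφ.2 4 le_rfl _ hz
  have key := taylor_mean_remainder_bound (f := ψ) (a := 0) (b := 1) (n := 3)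
    (by norm_num) (by exact_mod_cast hψcd) (right_mem_Icc.2 (by norm_num)) hC
  rw [taylor_within_apply] at key
  have h0 : (0:ℝ) ∈ Icc (0:ℝ) 1 := left_mem_Icc.2 (by norm_num)
  have hx0 : x + (0:ℝ) • y = x := by simp
  have e0 := hcomp 0 (by norm_num) 0 h0
  have e1 := hcomp 1 (by norm_num) 0 h0
  have e2 := hcomp 2 (by norm_num) 0 h0
  have e3 := hcomp 3 (by norm_num) 0 h0
  rw [hx0] at e0 e1 e2 e3
  rw [Finset.sum_range_succ, Finset.sum_range_succ, Finset.sum_range_succ,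
    Finset.sum_range_one, e0, e1, e2, e3] at key
  have hψ1 : ψ 1 = φ (x + y) := by simp [hψ]
  rw [hψ1] at key
  have e4 : iteratedFDeriv ℝ 0 φ x (fun _ => y) = φ x := by
    rw [iteratedFDeriv_zero_apply]
  rw [e4] at key
  rw [Real.norm_eq_abs] at key
  have : M * ‖y‖ ^ (4:ℕ) * (1 - 0) ^ (3 + 1) / ↑(Nat.factorial 3) = M * ‖y‖ ^ (4:ℕ) / 6 := by
    norm_num [Nat.factorial]
  rw [this] at key
  convert key using 2
  norm_num [Nat.factorial]
  ring

lemma innP_gradient {d : ℕ} (φ : Euc d → ℝ) (x y : Euc d) :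
    innP (gradient φ x) y = iteratedFDeriv ℝ 1 φ x (fun _ => y) := by
  rw [iteratedFDeriv_one_apply]
  exact InnerProductSpace.toDual_symm_apply

lemma D2_diag {d : ℕ} (φ : Euc d → ℝ) (x y : Euc d) :
    D2 φ x y y = iteratedFDeriv ℝ 2 φ x (fun _ => y) := by
  unfold D2
  congr 1
  funext i
  fin_cases i <;> rfl

lemma iter_neg {d : ℕ} (φ : Euc d → ℝ) (x y : Euc d) (k : ℕ) :
    iteratedFDeriv ℝ k φ x (fun _ => -y) = (-1 : ℝ) ^ k * iteratedFDeriv ℝ k φ x (fun _ => y) := by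
  have h1 : (fun _ : Fin k => -y) = fun i : Fin k => (-1 : ℝ) • y := by
    funext i; simp
  rw [h1, (iteratedFDeriv ℝ k φ x).map_smul_univ (fun _ : Fin k => (-1:ℝ)) (fun _ => y)]
  simp [smul_eq_mul]

end Helpers

set_option maxHeartbeats 2000000 in
/-- Pointwise expansion of `D_y[φ](x)` with error `O(|y|^{p−2})`
for `2 < p < 4`. -/
theorem statement12 {d : ℕ} (p : ℝ) (hp1 : 2 < p) (hp2 : p < 4) (x : Euc d) (R : ℝ)
    (hR0 : 0 < R) (hR1 : R < 1) (φ : Euc d → ℝ) (M : ℝ) (hφ : C4bOn φ (ball x R) M) :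
    ∃ C > 0, ∀ y : Euc d, y ∈ ball (0 : Euc d) (R / 2) → y ≠ 0 →
      |DyOp p φ x y -
          (p - 1) / ‖y‖ ^ p * |innP (gradient φ x) y| ^ (p - 2) * D2 φ x y y| ≤
        C * ‖y‖ ^ (p - 2) := by
  have hx0 : x ∈ ball x R := mem_ball_self hR0
  have hM0 : (0:ℝ) ≤ M := le_trans (norm_nonneg _) (hφ.2 0 (by norm_num) x hx0)
  set Λ : ℝ := M + 1 with hΛdef
  have hΛ1 : (1:ℝ) ≤ Λ := by rw [hΛdef]; linarith
  have hΛ0 : (0:ℝ) < Λ := by linarith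
  have hp1' : (0:ℝ) < p - 1 := by linarith
  have hp2' : (0:ℝ) < p - 2 := by linarith
  set K : ℝ := (p - 1) * (4 * Λ) ^ (p - 2) * Λ + (p - 1) * (4 * Λ) ^ (p - 2) * Λ
      + 8 * (p - 1) * (Λ ^ (p - 2) * Λ)
      + (2 * (p - 1) * Λ * Λ ^ (p - 2) + 2 * (p - 1) * Λ * ((p - 2) * (2 * Λ) ^ (p - 3) * Λ))
    with hKdef
  have hKpos : 0 < K := by
    have h1 : (0:ℝ) < (p - 1) * (4 * Λ) ^ (p - 2) * Λ :=
      mul_pos (mul_pos hp1' (Real.rpow_pos_of_pos (by linarith) _)) hΛ0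
    have h2 : (0:ℝ) < 8 * (p - 1) * (Λ ^ (p - 2) * Λ) :=
      mul_pos (by linarith) (mul_pos (Real.rpow_pos_of_pos hΛ0 _) hΛ0)
    have h3 : (0:ℝ) < 2 * (p - 1) * Λ * Λ ^ (p - 2) :=
      mul_pos (mul_pos (by linarith) hΛ0) (Real.rpow_pos_of_pos hΛ0 _)
    have h4 : (0:ℝ) < 2 * (p - 1) * Λ * ((p - 2) * (2 * Λ) ^ (p - 3) * Λ) :=
      mul_pos (mul_pos (by linarith) hΛ0)
        (mul_pos (mul_pos hp2' (Real.rpow_pos_of_pos (by linarith) _)) hΛ0)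
    rw [hKdef]; linarith
  refine ⟨K, hKpos, ?_⟩
  intro y hyb hy0
  have hr0 : 0 < ‖y‖ := norm_pos_iff.2 hy0
  have hyR2 : ‖y‖ < R / 2 := by rwa [mem_ball_zero_iff] at hyb
  have hr1 : ‖y‖ < 1 := by linarith
  have hyR : ‖y‖ < R := by linarith
  -- derivative bounds at `x`
  have hDk : ∀ k : ℕ, k ≤ 4 → |iteratedFDeriv ℝ k φ x (fun _ => y)| ≤ M * ‖y‖ ^ k := by
    intro k hk
    have hb : ‖iteratedFDeriv ℝ k φ x‖ ≤ M := by
      rw [← iteratedFDerivWithin_of_isOpen k isOpen_ball hx0]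
      exact hφ.2 k hk x hx0
    calc |iteratedFDeriv ℝ k φ x (fun _ => y)|
        = ‖iteratedFDeriv ℝ k φ x (fun _ => y)‖ := (Real.norm_eq_abs _).symm
      _ ≤ ‖iteratedFDeriv ℝ k φ x‖ * ∏ _i : Fin k, ‖y‖ :=
          (iteratedFDeriv ℝ k φ x).le_opNorm _
      _ = ‖iteratedFDeriv ℝ k φ x‖ * ‖y‖ ^ k := by rw [Finset.prod_const]; simp
      _ ≤ M * ‖y‖ ^ k := mul_le_mul_of_nonneg_right hb (by positivity)
  set g := iteratedFDeriv ℝ 1 φ x (fun _ => y) with hgdef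
  set Q := iteratedFDeriv ℝ 2 φ x (fun _ => y) with hQdef
  set c3 := iteratedFDeriv ℝ 3 φ x (fun _ => y) with hc3def
  -- Taylor expansions
  have hT₁ := taylor4 hφ hyR
  have hT₂ := taylor4 (y := -y) hφ (by rwa [norm_neg])
  rw [iter_neg φ x y 1, iter_neg φ x y 2, iter_neg φ x y 3, norm_neg,
    ← sub_eq_add_neg] at hT₂
  set e₁ : ℝ := φ (x + y) - φ x - g - (1/2) * Q - (1/6) * c3 with he₁def
  set e₂ : ℝ := φ (x - y) - φ x + g - (1/2) * Q + (1/6) * c3 with he₂def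
  have hr4 : (0:ℝ) < ‖y‖ ^ (4:ℕ) := by positivity
  have he₁ : |e₁| ≤ Λ * ‖y‖ ^ (4:ℕ) := by
    have : |e₁| ≤ M * ‖y‖ ^ (4:ℕ) / 6 := hT₁
    nlinarith
  have he₂ : |e₂| ≤ Λ * ‖y‖ ^ (4:ℕ) := by
    have h0 : |φ (x - y) - φ x - (-1)^1 * g - (1/2) * ((-1)^2 * Q) - (1/6) * ((-1)^3 * c3)|
        ≤ M * ‖y‖ ^ (4:ℕ) / 6 := hT₂
    have h1 : φ (x - y) - φ x - (-1)^1 * g - (1/2) * ((-1)^2 * Q) - (1/6) * ((-1)^3 * c3)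
        = e₂ := by rw [he₂def]; ring
    rw [h1] at h0
    nlinarith
  have hg : |g| ≤ Λ * ‖y‖ := by
    have := hDk 1 (by norm_num)
    have h2 : M * ‖y‖ ^ (1:ℕ) ≤ Λ * ‖y‖ := by
      rw [pow_one]
      nlinarith
    calc |g| ≤ M * ‖y‖ ^ (1:ℕ) := this
      _ ≤ Λ * ‖y‖ := h2
  have hh : |Q / 2| ≤ Λ * ‖y‖ ^ (2:ℕ) := by
    have := hDk 2 (by norm_num)
    have h2 : (0:ℝ) < ‖y‖ ^ (2:ℕ) := by positivity
    rw [abs_div]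
    rw [hQdef] at *
    calc |iteratedFDeriv ℝ 2 φ x (fun _ => y)| / |2|
        ≤ (M * ‖y‖ ^ (2:ℕ)) / 2 := by
          rw [show |(2:ℝ)| = 2 by norm_num]
          apply div_le_div_of_nonneg_right this (by norm_num) |>.trans_eq rfl
      _ ≤ Λ * ‖y‖ ^ (2:ℕ) := by nlinarith
  have hc : |c3 / 6| ≤ Λ * ‖y‖ ^ (3:ℕ) := by
    have := hDk 3 (by norm_num)
    have h2 : (0:ℝ) < ‖y‖ ^ (3:ℕ) := by positivity
    rw [abs_div]
    rw [hc3def] at *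
    calc |iteratedFDeriv ℝ 3 φ x (fun _ => y)| / |6|
        ≤ (M * ‖y‖ ^ (3:ℕ)) / 6 := by
          rw [show |(6:ℝ)| = 6 by norm_num]
          apply div_le_div_of_nonneg_right this (by norm_num) |>.trans_eq rfl
      _ ≤ Λ * ‖y‖ ^ (3:ℕ) := by nlinarith
  have hu₁ : φ (x + y) - φ x = g + Q / 2 + c3 / 6 + e₁ := by rw [he₁def]; ring
  have hu₂ : φ (x - y) - φ x = -g + Q / 2 - c3 / 6 + e₂ := by rw [he₂def]; ring
  have hcore := core_est hp1 hp2 hΛ1 hr0 hr1 hg hh hc he₁ he₂ hu₁ hu₂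
  rw [show (2 * (Q / 2) : ℝ) = Q by ring] at hcore
  -- convert to the goal
  rw [DyOp, Jp, Jp, innP_gradient, D2_diag, ← hgdef, ← hQdef]
  have hrp : (0:ℝ) < ‖y‖ ^ p := Real.rpow_pos_of_pos hr0 p
  have hfrac : (|φ (x + y) - φ x| ^ (p - 2) * (φ (x + y) - φ x)
        + |φ (x - y) - φ x| ^ (p - 2) * (φ (x - y) - φ x)) / ‖y‖ ^ p
      - (p - 1) / ‖y‖ ^ p * |g| ^ (p - 2) * Q
      = ((|φ (x + y) - φ x| ^ (p - 2) * (φ (x + y) - φ x)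
          + |φ (x - y) - φ x| ^ (p - 2) * (φ (x - y) - φ x))
        - (p - 1) * |g| ^ (p - 2) * Q) / ‖y‖ ^ p := by
    field_simp
  rw [hfrac, abs_div, abs_of_pos hrp, div_le_iff₀ hrp]
  calc abs ((|φ (x + y) - φ x| ^ (p - 2) * (φ (x + y) - φ x)
          + |φ (x - y) - φ x| ^ (p - 2) * (φ (x - y) - φ x))
        - (p - 1) * |g| ^ (p - 2) * Q)
      ≤ K * ‖y‖ ^ (2 * p - 2) := hcore
    _ = K * ‖y‖ ^ (p - 2) * ‖y‖ ^ p := by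
        rw [mul_assoc, ← Real.rpow_add hr0]
        ring_nf
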